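/- arXiv:2211.06190 — 6 statements merged into one kernel-verified Lean document; each statement's English description precedes it below -/
import Mathlib

section
/- If (A, B) is an effectively inseparable pair of disjoint r.e. sets and f : ℕ → ℕ is a recursive function semi-reducing (A, B) to a disjoint pair (C, D) of r.e. sets (i.e., x ∈ A implies f(x) ∈ C and x ∈ B implies f(x) ∈ D), then (C, D) is also effectively inseparable. -/
/-- `W e` is the `e`-th recursively enumerable set: the domain of the `e`-th
partial recursive function in the standard enumeration via `Nat.Partrec.Code`. -/
def W (e : ℕ) : Set ℕ :=
  {x | ((Denumerable.ofNat Nat.Partrec.Code e).eval x).Dom}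

/-- A set is recursively enumerable if it is `W e` for some index `e`. -/
def REset (A : Set ℕ) : Prop := ∃ e, W e = A

/-- `(A, B)` is an effectively inseparable pair. -/
def EIpair (A B : Set ℕ) : Prop :=
  ∃ f : ℕ → ℕ → ℕ, Computable₂ f ∧
    ∀ i j, A ⊆ W i → B ⊆ W j → W i ∩ W j = ∅ → f i j ∉ W i ∪ W j

/-- `(A, B)` is semi-reducible to `(C, D)`: a total recursive `f` maps `A` into `C`
and `B` into `D`. -/
def SemiRed (A B C D : Set ℕ) : Prop :=
  ∃ f : ℕ → ℕ, Computable f ∧ (∀ x ∈ A, f x ∈ C) ∧ (∀ x ∈ B, f x ∈ D)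

theorem ei_preserved_by_semireduction (A B C D : Set ℕ)
    (hA : REset A) (hB : REset B) (hAB : A ∩ B = ∅) (hEI : EIpair A B)
    (hC : REset C) (hD : REset D) (hCD : C ∩ D = ∅)
    (hred : SemiRed A B C D) : EIpair C D := by
  obtain ⟨g, gcomp, gEI⟩ := hEI
  obtain ⟨f, fcomp, hfa, hfb⟩ := hred
  obtain ⟨cf, hcf⟩ := Nat.Partrec.Code.exists_code.1 fcomp
  -- index transformer: h e is an index for x ↦ eval (ofNat e) (f x)
  set h : ℕ → ℕ := fun e =>
    Encodable.encode (((Denumerable.ofNat Nat.Partrec.Code e)).comp cf) with hh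
  have hW : ∀ e, W (h e) = f ⁻¹' (W e) := by
    intro e
    ext x
    simp only [W, hh, Set.mem_setOf_eq, Set.mem_preimage,
      Denumerable.ofNat_encode, Nat.Partrec.Code.eval]
    rw [hcf]
    simp
    exact ⟨fun ⟨_, h⟩ => h, fun h => ⟨trivial, h⟩⟩
  have hcomp : Computable h := by
    have : Primrec h :=
      Primrec.encode.comp (Nat.Partrec.Code.primrec₂_comp.comp
        (Primrec.ofNat Nat.Partrec.Code) (Primrec.const cf))
    exact this.to_comp
  refine ⟨fun i j => f (g (h i) (h j)),
    fcomp.comp₂ (gcomp.comp₂ (hcomp.comp₂ Computable.fst)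
      (hcomp.comp₂ Computable.snd)), ?_⟩
  intro i j hCi hDj hij
  have hAi : A ⊆ W (h i) := by
    rw [hW]; intro x hx; exact hCi (hfa x hx)
  have hBj : B ⊆ W (h j) := by
    rw [hW]; intro x hx; exact hDj (hfb x hx)
  have hdisj : W (h i) ∩ W (h j) = ∅ := by
    rw [hW, hW]
    ext x
    simp only [Set.mem_inter_iff, Set.mem_preimage, Set.mem_empty_iff_false, iff_false]
    intro ⟨h1, h2⟩
    have : f x ∈ W i ∩ W j := ⟨h1, h2⟩
    rw [hij] at this
    exact this
  have := gEI (h i) (h j) hAi hBj hdisj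
  rw [hW, hW] at this
  intro hmem
  exact this (by simpa using hmem)
end

section
/- There exists an effectively inseparable pair of disjoint recursively enumerable subsets of ℕ. -/
open Nat.Partrec (Code)
open Nat.Partrec.Code

private def filtEval (v : ℕ) : ℕ →. ℕ := fun x =>
  ((Denumerable.ofNat Code x).eval x).bind fun a =>
    Part.ofOption (if a = v then some 0 else none)

private theorem filtEval_partrec (v : ℕ) : Partrec (filtEval v) := by
  have h1 : Partrec fun x : ℕ => (Denumerable.ofNat Code x).eval x :=
    eval_part.comp (Computable.ofNat _) Computable.id
  have h2 : Computable fun p : ℕ × ℕ => (if p.2 = v then some 0 else none : Option ℕ) :=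
    (Primrec.ite (Primrec.eq.comp Primrec.snd (Primrec.const v))
      (Primrec.const (some 0)) (Primrec.const none)).to_comp
  exact h1.bind (Computable.ofOption h2).to₂

private theorem filtEval_dom (v x : ℕ) :
    (filtEval v x).Dom ↔ v ∈ (Denumerable.ofNat Code x).eval x := by
  simp only [filtEval, Part.dom_iff_mem, Part.mem_bind_iff, Part.mem_ofOption]
  constructor
  · rintro ⟨y, a, ha, hy⟩
    split at hy
    · next h => exact h ▸ ha
    · simp at hy
  · intro h
    exact ⟨0, v, h, by simp⟩

-- the diagonal sets
private def Adiag : Set ℕ := {x | 0 ∈ (Denumerable.ofNat Code x).eval x}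
private def Bdiag : Set ℕ := {x | 1 ∈ (Denumerable.ofNat Code x).eval x}

-- the searching option function
private def sch (i j x n : ℕ) : Option ℕ :=
  cond (evaln n (Denumerable.ofNat Code i) x).isSome (some 1)
    (cond (evaln n (Denumerable.ofNat Code j) x).isSome (some 0) none)

private theorem sch_comp :
    Computable fun p : ℕ × ℕ => sch p.1.unpair.1 p.1.unpair.2.unpair.1 p.1.unpair.2.unpair.2 p.2 := by
  have ev : ∀ g : ℕ → ℕ, Primrec g →
      Primrec fun p : ℕ × ℕ => (evaln p.2 (Denumerable.ofNat Code (g p.1)) p.1.unpair.2.unpair.2).isSome := by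
    intro g hg
    have : Primrec fun p : ℕ × ℕ =>
        evaln p.2 (Denumerable.ofNat Code (g p.1)) p.1.unpair.2.unpair.2 :=
      primrec_evaln.comp
        (((Primrec.snd).pair ((Primrec.ofNat Code).comp (hg.comp Primrec.fst))).pair
          ((Primrec.snd.comp <| Primrec.unpair.comp <| Primrec.snd.comp <|
            Primrec.unpair.comp Primrec.fst)))
    exact Primrec.option_isSome.comp this
  have h1 := ev (fun m => m.unpair.1) (Primrec.fst.comp Primrec.unpair)
  have h2 := ev (fun m => m.unpair.2.unpair.1)
    (Primrec.fst.comp <| Primrec.unpair.comp <| Primrec.snd.comp Primrec.unpair)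
  exact (Primrec.cond h1 (Primrec.const (some 1))
    (Primrec.cond h2 (Primrec.const (some 0)) (Primrec.const none))).to_comp

private def schPart : ℕ →. ℕ := fun m =>
  Nat.rfindOpt (sch m.unpair.1 m.unpair.2.unpair.1 m.unpair.2.unpair.2)

private theorem schPart_partrec : Partrec schPart :=
  Partrec.rfindOpt sch_comp.to₂

theorem exists_ei_pair :
    ∃ A B : Set ℕ, REset A ∧ REset B ∧ A ∩ B = ∅ ∧ EIpair A B := by
  obtain ⟨ca, hca⟩ := Nat.Partrec.Code.exists_code.1 (Partrec.nat_iff.1 (filtEval_partrec 0))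
  obtain ⟨cb, hcb⟩ := Nat.Partrec.Code.exists_code.1 (Partrec.nat_iff.1 (filtEval_partrec 1))
  obtain ⟨cs, hcs⟩ := Nat.Partrec.Code.exists_code.1 (Partrec.nat_iff.1 schPart_partrec)
  refine ⟨Adiag, Bdiag, ⟨Encodable.encode ca, ?_⟩, ⟨Encodable.encode cb, ?_⟩, ?_, ?_⟩
  · ext x
    show ((Denumerable.ofNat Code (Encodable.encode ca)).eval x).Dom ↔ x ∈ Adiag
    rw [Denumerable.ofNat_encode, hca]
    exact filtEval_dom 0 x
  · ext x
    show ((Denumerable.ofNat Code (Encodable.encode cb)).eval x).Dom ↔ x ∈ Bdiag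
    rw [Denumerable.ofNat_encode, hcb]
    exact filtEval_dom 1 x
  · apply Set.eq_empty_iff_forall_notMem.2
    rintro x ⟨h0, h1⟩
    have := Part.mem_unique h0 h1
    simp at this
  · refine ⟨fun i j => Encodable.encode ((cs.curry i).curry j), ?_, ?_⟩
    · have : Primrec₂ fun i j : ℕ => Encodable.encode ((cs.curry i).curry j) :=
        Primrec.encode.comp₂
          (primrec₂_curry.comp₂ (primrec₂_curry.comp₂ (Primrec₂.const cs) Primrec₂.left) Primrec₂.right)
      exact this.to_comp
    · intro i j hA hB hd
      set e := Encodable.encode ((cs.curry i).curry j) with he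
      have keval : (Denumerable.ofNat Code e).eval e = Nat.rfindOpt (sch i j e) := by
        rw [he, Denumerable.ofNat_encode, eval_curry, eval_curry, hcs]
        simp [schPart, Nat.unpair_pair]
      have hdisj : ∀ x, x ∈ W i → x ∈ W j → False := by
        intro x hx hy
        have hxy : x ∈ W i ∩ W j := ⟨hx, hy⟩
        rw [hd] at hxy; exact hxy
      intro hmem
      have hdom : (Nat.rfindOpt (sch i j e)).Dom := by
        apply Nat.rfindOpt_dom.2
        cases hmem with
        | inl h =>
          obtain ⟨a, ha⟩ := Part.dom_iff_mem.1 h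
          obtain ⟨k, hk⟩ := evaln_complete.1 ha
          exact ⟨k, 1, by have hs : (evaln k (Denumerable.ofNat Code i) e).isSome = true := Option.isSome_iff_exists.2 ⟨_, hk⟩; simp only [sch, hs, cond_true]; rfl⟩
        | inr h =>
          obtain ⟨a, ha⟩ := Part.dom_iff_mem.1 h
          obtain ⟨k, hk⟩ := evaln_complete.1 ha
          cases hb : (evaln k (Denumerable.ofNat Code i) e).isSome
          · exact ⟨k, 0, by have hs : (evaln k (Denumerable.ofNat Code j) e).isSome = true := Option.isSome_iff_exists.2 ⟨_, hk⟩; simp only [sch, hb, hs, cond_false, cond_true]; rfl⟩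
          · exact ⟨k, 1, by simp [sch, hb]⟩
      obtain ⟨a, hao⟩ := Part.dom_iff_mem.1 hdom
      obtain ⟨n, hn⟩ := Nat.rfindOpt_spec hao
      cases hbi : (evaln n (Denumerable.ofNat Code i) e).isSome with
      | true =>
        have ha1 : a = 1 := by have := hn; simp [sch, hbi] at this; omega
        obtain ⟨v, hv⟩ := Option.isSome_iff_exists.1 hbi
        have hei : e ∈ W i := Part.dom_iff_mem.2 ⟨v, evaln_sound hv⟩
        have heB : e ∈ Bdiag :=
          show (1:ℕ) ∈ (Denumerable.ofNat Code e).eval e by rw [keval]; exact ha1 ▸ hao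
        exact hdisj e hei (hB heB)
      | false =>
        cases hbj : (evaln n (Denumerable.ofNat Code j) e).isSome with
        | true =>
          have ha0 : a = 0 := by have := hn; simp [sch, hbi, hbj] at this; omega
          obtain ⟨v, hv⟩ := Option.isSome_iff_exists.1 hbj
          have hej : e ∈ W j := Part.dom_iff_mem.2 ⟨v, evaln_sound hv⟩
          have heA : e ∈ Adiag :=
            show (0:ℕ) ∈ (Denumerable.ofNat Code e).eval e by rw [keval]; exact ha0 ▸ hao
          exact hdisj e (hA heA) hej
        | false =>
          simp [sch, hbi, hbj] at hn
end

section
/- Let T be a consistent r.e. theory whose nuclei pair (T_P, T_R) is effectively inseparable. Then T is essentially undecidable: every consistent r.e. extension S of T (in the same language) is undecidable. -/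
open FirstOrder FirstOrder.Language

/-- The set of sentences provable in (i.e., logical consequences of) `T`. -/
def thmSet {L : Language} (T : L.Theory) : Set L.Sentence := {φ | T ⊨ᵇ φ}

/-- The set of sentences refutable in `T`. -/
def refSet {L : Language} (T : L.Theory) : Set L.Sentence := {φ | T ⊨ᵇ ∼φ}

/-- The set of Gödel numbers (codes) of a set of sentences. -/
def codes {L : Language} [Encodable L.Sentence] (S : Set L.Sentence) : Set ℕ :=
  Encodable.encode '' S

/-- Any r.e. predicate on ℕ is of the form `W e`. -/
lemma exists_W_of_rePred {p : ℕ → Prop} (hp : REPred p) : ∃ e, W e = {x | p x} := by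
  have h1 : Partrec fun a : ℕ => (Part.assert (p a) fun _ => Part.some ()).map fun _ => (0 : ℕ) :=
    hp.map ((Computable.const 0).comp Computable.fst).to₂
  obtain ⟨c, hc⟩ := Nat.Partrec.Code.exists_code.1 (Partrec.nat_iff.1 h1)
  refine ⟨Encodable.encode c, ?_⟩
  ext x
  simp [W, Denumerable.ofNat_encode, hc, Part.dom_iff_mem]

lemma models_mono {L : Language} {T S : L.Theory} (h : T ⊆ S) {φ : L.Sentence}
    (hφ : T ⊨ᵇ φ) : S ⊨ᵇ φ :=
  Theory.models_sentence_iff.2 fun M =>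
    Theory.models_sentence_iff.1 hφ (M.subtheoryModel h)

theorem ei_theory_essentially_undecidable {L : Language} [Encodable L.Sentence]
    (T : L.Theory) (hTcons : T.IsSatisfiable) (hTre : REset (codes (thmSet T)))
    (hEI : EIpair (codes (thmSet T)) (codes (refSet T))) :
    ∀ S : L.Theory, T ⊆ S → S.IsSatisfiable → REset (codes (thmSet S)) →
      ¬ ComputablePred (· ∈ codes (thmSet S)) := by
  intro S hTS hScons _ hcomp
  obtain ⟨f, -, hf⟩ := hEI
  -- indices for codes (thmSet S) and its complement
  obtain ⟨i, hi⟩ := exists_W_of_rePred hcomp.to_re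
  obtain ⟨j, hj⟩ := exists_W_of_rePred hcomp.not.to_re
  have hWi : W i = codes (thmSet S) := hi
  have hWj : W j = (codes (thmSet S))ᶜ := hj
  -- subset conditions
  have h1 : codes (thmSet T) ⊆ W i := by
    rw [hWi]
    rintro x ⟨φ, hφ, rfl⟩
    exact ⟨φ, models_mono hTS hφ, rfl⟩
  have h2 : codes (refSet T) ⊆ W j := by
    rw [hWj]
    rintro x ⟨φ, hφ, rfl⟩ ⟨ψ, hψ, hψe⟩
    have : ψ = φ := Encodable.encode_injective hψe
    subst this
    have hMn := (models_mono hTS hφ).realize_sentence hScons.some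
    have hM := hψ.realize_sentence hScons.some
    rw [Sentence.realize_not] at hMn
    exact hMn hM
  have h3 : W i ∩ W j = ∅ := by
    rw [hWi, hWj, Set.inter_compl_self]
  have := hf i j h1 h2 h3
  apply this
  rw [hWi, hWj]
  by_cases h : f i j ∈ codes (thmSet S)
  · exact Set.mem_union_left _ h
  · exact Set.mem_union_right _ h
end

section
/- Let X be a filter of sentences and Y an idea of sentences with X ∩ Y = ∅. Define Z₀ = {φ : (P → φ) ∈ X}, Z₁ = {φ : (¬P → φ) ∈ X}, Z₂ = {φ : (P ∧ φ) ∈ Y}, Z₃ = {φ : (¬P ∧ φ) ∈ Y}, where P is a fixed sentence. Then Z₀ ∩ Z₂ = ∅ or Z₁ ∩ Z₃ = ∅. -/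
/-!
From `P ⟹ φ` and `∼P ⟹ ψ` in the filter one derives the case split `(P ⊓ φ) ⊔ (∼P ⊓ ψ)`
in the filter, while from `P ⊓ φ` and `∼P ⊓ ψ` in the idea it lies in the idea as well;
so both intersections being nonempty contradicts `X ∩ Y = ∅`.
-/

open FirstOrder FirstOrder.Language

/-- A filter of sentences: closed under consequence and conjunction, omitting `⊥`. -/
def SFilter {L : Language} (X : Set L.Sentence) : Prop :=
  (∀ α ∈ X, ∀ β : L.Sentence, ({α} : L.Theory) ⊨ᵇ β → β ∈ X) ∧
  (∀ α ∈ X, ∀ β ∈ X, α ⊓ β ∈ X) ∧ (⊥ : L.Sentence) ∉ X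

/-- An idea of sentences: downward closed under provability and closed under
disjunction, omitting `⊤`. -/
def SIdea {L : Language} (Y : Set L.Sentence) : Prop :=
  (∀ α ∈ Y, ∀ β : L.Sentence, ({β} : L.Theory) ⊨ᵇ α → β ∈ Y) ∧
  (∀ α ∈ Y, ∀ β ∈ Y, α ⊔ β ∈ Y) ∧ (⊤ : L.Sentence) ∉ Y

variable {L : Language}

theorem models_inf_sup_inf_of_imp_inf_imp (P φ ψ : L.Sentence) :
    ({(P ⟹ φ) ⊓ (∼P ⟹ ψ)} : L.Theory) ⊨ᵇ (P ⊓ φ) ⊔ (∼P ⊓ ψ) := by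
  rw [Theory.models_sentence_iff]
  intro M
  have hM := M.is_model.realize_of_mem ((P ⟹ φ) ⊓ (∼P ⟹ ψ)) (Set.mem_singleton _)
  simp only [Sentence.Realize, Formula.Realize, BoundedFormula.realize_inf,
    BoundedFormula.realize_imp, BoundedFormula.realize_sup, BoundedFormula.realize_not] at hM ⊢
  tauto

namespace SFilter

variable {X : Set L.Sentence}

theorem mem_of_models (hX : SFilter X) {α β : L.Sentence} (hα : α ∈ X)
    (h : ({α} : L.Theory) ⊨ᵇ β) : β ∈ X :=
  hX.1 α hα β h

theorem inf_mem (hX : SFilter X) {α β : L.Sentence} (hα : α ∈ X) (hβ : β ∈ X) : α ⊓ β ∈ X :=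
  hX.2.1 α hα β hβ

theorem inf_sup_inf_mem_of_imp_mem (hX : SFilter X) {P φ ψ : L.Sentence}
    (hφ : (P ⟹ φ) ∈ X) (hψ : (∼P ⟹ ψ) ∈ X) : (P ⊓ φ) ⊔ (∼P ⊓ ψ) ∈ X :=
  hX.mem_of_models (hX.inf_mem hφ hψ) (models_inf_sup_inf_of_imp_inf_imp P φ ψ)

end SFilter

theorem SIdea.sup_mem {Y : Set L.Sentence} (hY : SIdea Y) {α β : L.Sentence}
    (hα : α ∈ Y) (hβ : β ∈ Y) : α ⊔ β ∈ Y :=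
  hY.2.1 α hα β hβ

theorem filter_idea_case_split {L : Language} (X Y : Set L.Sentence)
    (hX : SFilter X) (hY : SIdea Y) (hdisj : X ∩ Y = ∅) (P : L.Sentence) :
    {φ : L.Sentence | (P ⟹ φ) ∈ X} ∩ {φ : L.Sentence | (P ⊓ φ) ∈ Y} = ∅ ∨
    {φ : L.Sentence | (∼P ⟹ φ) ∈ X} ∩ {φ : L.Sentence | (∼P ⊓ φ) ∈ Y} = ∅ := by
  by_contra! hne
  obtain ⟨⟨φ, hφX, hφY⟩, ⟨ψ, hψX, hψY⟩⟩ := hne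
  have hmem : (P ⊓ φ) ⊔ (∼P ⊓ ψ) ∈ X ∩ Y :=
    ⟨hX.inf_sup_inf_mem_of_imp_mem hφX hψX, hY.sup_mem hφY hψY⟩
  exact Set.eq_empty_iff_forall_notMem.mp hdisj _ hmem
end

section
/- Smullyan's characterization: a consistent r.e. theory T is effectively inseparable if and only if every disjoint pair (A, B) of r.e. sets is semi-reducible to (T_P, T_R). -/
open FirstOrder FirstOrder.Language

open Nat.Partrec (Code)
open Nat.Partrec.Code

/-- Auxiliary: the diagonal set `{x : v ∈ φ_x(x)}`. -/
def Kset (v : ℕ) : Set ℕ := {x | v ∈ (Denumerable.ofNat Code x).eval x}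

lemma Kset_re (v : ℕ) : REset (Kset v) := by
  have hpr : Partrec fun x : ℕ => ((Denumerable.ofNat Code x).eval x).bind
      (fun m => bif m == v then Part.some m else Part.none) :=
    Partrec.bind (eval_part.comp (Computable.ofNat Code) Computable.id)
      (Partrec.cond (Primrec.beq.comp Primrec.snd (Primrec.const v)).to_comp
        (Partrec.some.comp Computable.snd) Partrec.none).to₂
  obtain ⟨c, hc⟩ := exists_code.1 (Partrec.nat_iff.1 hpr)
  refine ⟨Encodable.encode c, ?_⟩
  ext x
  simp only [W, Set.mem_setOf_eq, Denumerable.ofNat_encode, hc, Kset,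
    Part.dom_iff_mem, Part.mem_bind_iff]
  constructor
  · rintro ⟨y, m, hm, hy⟩
    rcases e : (m == v) with _ | _ <;> rw [e] at hy <;> simp at hy
    · obtain rfl : m = v := by simpa using e
      exact hm
  · intro hv
    exact ⟨v, v, hv, by simp⟩

lemma Kset_disj : Kset 0 ∩ Kset 1 = ∅ := by
  ext x
  simp only [Set.mem_inter_iff, Set.mem_empty_iff_false, iff_false, not_and, Kset,
    Set.mem_setOf_eq]
  intro h0 h1
  exact absurd (Part.mem_unique h0 h1) (by norm_num)

lemma thm_ref_disj {L : Language} [Encodable L.Sentence] (T : L.Theory)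
    (h : T.IsSatisfiable) : codes (thmSet T) ∩ codes (refSet T) = ∅ := by
  ext n
  simp only [Set.mem_inter_iff, Set.mem_empty_iff_false, iff_false, not_and]
  rintro ⟨φ, hφ, rfl⟩ ⟨ψ, hψ, henc⟩
  have hpe : ψ = φ := Encodable.encode_injective henc
  subst hpe
  obtain ⟨M⟩ := h
  have h1 := hφ M default default
  have h2 := hψ M default default
  rw [BoundedFormula.realize_not] at h2
  exact h2 h1

/-- The → direction, abstractly. -/
lemma dir_mp (P R : Set ℕ) (hPR : P ∩ R = ∅)
    (hP : REset P) (hR : REset R) (hEI : EIpair P R) :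
    ∀ A B : Set ℕ, REset A → REset B → A ∩ B = ∅ → SemiRed A B P R := by
  obtain ⟨f, hf, hEIf⟩ := hEI
  obtain ⟨p, hp⟩ := hP
  obtain ⟨r, hr⟩ := hR
  intro A B hA hB hAB
  obtain ⟨a, ha⟩ := hA
  obtain ⟨b, hb⟩ := hB
  -- projections
  have pt : Primrec fun cu : Code × ℕ => cu.2.unpair.1.unpair.1 :=
    Primrec.fst.comp (Primrec.unpair.comp (Primrec.fst.comp (Primrec.unpair.comp Primrec.snd)))
  have px : Primrec fun cu : Code × ℕ => cu.2.unpair.1.unpair.2 :=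
    Primrec.snd.comp (Primrec.unpair.comp (Primrec.fst.comp (Primrec.unpair.comp Primrec.snd)))
  have py : Primrec fun cu : Code × ℕ => cu.2.unpair.2 :=
    Primrec.snd.comp (Primrec.unpair.comp Primrec.snd)
  set base : Code × ℕ →. ℕ := fun cu =>
    (Denumerable.ofNat Code (bif cu.2.unpair.1.unpair.1 == 0 then p else r)).eval
      cu.2.unpair.2 with hbase_def
  set extra : Code × ℕ →. ℕ := fun cu =>
    bif cu.2.unpair.2 ==
        f (Encodable.encode (Code.curry cu.1 (Nat.pair 0 cu.2.unpair.1.unpair.2)))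
          (Encodable.encode (Code.curry cu.1 (Nat.pair 1 cu.2.unpair.1.unpair.2)))
      then (Denumerable.ofNat Code (bif cu.2.unpair.1.unpair.1 == 0 then b else a)).eval
        cu.2.unpair.1.unpair.2
      else Part.none with hextra_def
  have hbase : Partrec base :=
    eval_part.comp
      ((Computable.ofNat Code).comp
        (Computable.cond (Primrec.beq.comp pt (Primrec.const 0)).to_comp
          (Computable.const p) (Computable.const r)))
      py.to_comp
  have he0 : Computable fun cu : Code × ℕ =>
      Encodable.encode (Code.curry cu.1 (Nat.pair 0 cu.2.unpair.1.unpair.2)) :=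
    (Primrec.encode.comp (primrec₂_curry.comp Primrec.fst
      (Primrec₂.natPair.comp (Primrec.const 0) px))).to_comp
  have he1 : Computable fun cu : Code × ℕ =>
      Encodable.encode (Code.curry cu.1 (Nat.pair 1 cu.2.unpair.1.unpair.2)) :=
    (Primrec.encode.comp (primrec₂_curry.comp Primrec.fst
      (Primrec₂.natPair.comp (Primrec.const 1) px))).to_comp
  have hextra : Partrec extra :=
    Partrec.cond
      (Primrec.beq.to_comp.comp py.to_comp (hf.comp he0 he1))
      (eval_part.comp
        ((Computable.ofNat Code).comp
          (Computable.cond (Primrec.beq.comp pt (Primrec.const 0)).to_comp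
            (Computable.const b) (Computable.const a)))
        px.to_comp)
      Partrec.none
  obtain ⟨k, hk, Hk⟩ := Partrec.merge' hbase hextra
  have hk₂ : Partrec₂ fun (c : Code) (u : ℕ) => k (c, u) := hk
  obtain ⟨c₀, ec₀⟩ := fixed_point₂ hk₂
  set g : ℕ → ℕ := fun x =>
    f (Encodable.encode (Code.curry c₀ (Nat.pair 0 x)))
      (Encodable.encode (Code.curry c₀ (Nat.pair 1 x))) with hg_def
  have hgc : Computable g :=
    hf.comp
      ((Primrec.encode.comp (primrec₂_curry.comp (Primrec.const c₀)
        (Primrec₂.natPair.comp (Primrec.const 0) Primrec.id))).to_comp)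
      ((Primrec.encode.comp (primrec₂_curry.comp (Primrec.const c₀)
        (Primrec₂.natPair.comp (Primrec.const 1) Primrec.id))).to_comp)
  have hchar : ∀ t x y, y ∈ W (Encodable.encode (Code.curry c₀ (Nat.pair t x))) ↔
      (y ∈ W (bif t == 0 then p else r) ∨
        (y = g x ∧ x ∈ W (bif t == 0 then b else a))) := by
    intro t x y
    have h1 : y ∈ W (Encodable.encode (Code.curry c₀ (Nat.pair t x))) ↔
        (k (c₀, Nat.pair (Nat.pair t x) y)).Dom := by
      show ((Denumerable.ofNat Code _).eval y).Dom ↔ _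
      rw [Denumerable.ofNat_encode, eval_curry, ec₀]
    rw [h1, (Hk (c₀, Nat.pair (Nat.pair t x) y)).2]
    have hbv : base (c₀, Nat.pair (Nat.pair t x) y) =
        (Denumerable.ofNat Code (bif t == 0 then p else r)).eval y := by
      simp [hbase_def, Nat.unpair_pair]
    have hev : extra (c₀, Nat.pair (Nat.pair t x) y) =
        bif y == g x
          then (Denumerable.ofNat Code (bif t == 0 then b else a)).eval x
          else Part.none := by
      simp [hextra_def, hg_def, Nat.unpair_pair]
    rw [hbv, hev]
    rcases e : (y == g x) with _ | _
    · simp only [Bool.cond_false]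
      constructor
      · rintro (h | h)
        · exact Or.inl h
        · exact absurd h (fun hh => hh.elim)
      · rintro (h | ⟨rfl, _⟩)
        · exact Or.inl h
        · simp at e
    · simp only [Bool.cond_true]
      have hye : y = g x := by simpa using e
      constructor
      · rintro (h | h)
        exacts [Or.inl h, Or.inr ⟨hye, h⟩]
      · rintro (h | ⟨_, h⟩)
        exacts [Or.inl h, Or.inr h]
  have hchar0 : ∀ x y, y ∈ W (Encodable.encode (Code.curry c₀ (Nat.pair 0 x))) ↔
      (y ∈ P ∨ (y = g x ∧ x ∈ B)) := by
    intro x y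
    simpa [hp, hb] using hchar 0 x y
  have hchar1 : ∀ x y, y ∈ W (Encodable.encode (Code.curry c₀ (Nat.pair 1 x))) ↔
      (y ∈ R ∨ (y = g x ∧ x ∈ A)) := by
    intro x y
    simpa [hr, ha] using hchar 1 x y
  refine ⟨g, hgc, ?_, ?_⟩
  · intro x hxA
    have hxB : x ∉ B := fun hxB => by
      have hmem : x ∈ A ∩ B := ⟨hxA, hxB⟩
      rw [hAB] at hmem
      exact hmem
    have hPi : P ⊆ W (Encodable.encode (Code.curry c₀ (Nat.pair 0 x))) :=
      fun y hy => (hchar0 x y).2 (Or.inl hy)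
    have hRj : R ⊆ W (Encodable.encode (Code.curry c₀ (Nat.pair 1 x))) :=
      fun y hy => (hchar1 x y).2 (Or.inl hy)
    by_cases hint : W (Encodable.encode (Code.curry c₀ (Nat.pair 0 x))) ∩
        W (Encodable.encode (Code.curry c₀ (Nat.pair 1 x))) = ∅
    · exact absurd ((Set.mem_union _ _ _).2 (Or.inr ((hchar1 x (g x)).2 (Or.inr ⟨rfl, hxA⟩))))
        (hEIf _ _ hPi hRj hint)
    · obtain ⟨z, hz1, hz2⟩ := Set.nonempty_iff_ne_empty.2 hint
      rcases (hchar0 x z).1 hz1 with hzP | ⟨rfl, hzB⟩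
      · rcases (hchar1 x z).1 hz2 with hzR | ⟨hzg, _⟩
        · have hmem : z ∈ P ∩ R := ⟨hzP, hzR⟩
          rw [hPR] at hmem
          exact hmem.elim
        · rw [← hzg]
          exact hzP
      · exact absurd hzB hxB
  · intro x hxB
    have hxA : x ∉ A := fun hxA => by
      have hmem : x ∈ A ∩ B := ⟨hxA, hxB⟩
      rw [hAB] at hmem
      exact hmem
    have hPi : P ⊆ W (Encodable.encode (Code.curry c₀ (Nat.pair 0 x))) :=
      fun y hy => (hchar0 x y).2 (Or.inl hy)
    have hRj : R ⊆ W (Encodable.encode (Code.curry c₀ (Nat.pair 1 x))) :=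
      fun y hy => (hchar1 x y).2 (Or.inl hy)
    by_cases hint : W (Encodable.encode (Code.curry c₀ (Nat.pair 0 x))) ∩
        W (Encodable.encode (Code.curry c₀ (Nat.pair 1 x))) = ∅
    · exact absurd ((Set.mem_union _ _ _).2 (Or.inl ((hchar0 x (g x)).2 (Or.inr ⟨rfl, hxB⟩))))
        (hEIf _ _ hPi hRj hint)
    · obtain ⟨z, hz1, hz2⟩ := Set.nonempty_iff_ne_empty.2 hint
      rcases (hchar1 x z).1 hz2 with hzR | ⟨rfl, hzA⟩
      · rcases (hchar0 x z).1 hz1 with hzP | ⟨hzg, _⟩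
        · have hmem : z ∈ P ∩ R := ⟨hzP, hzR⟩
          rw [hPR] at hmem
          exact hmem.elim
        · rw [← hzg]
          exact hzR
      · exact absurd hzA hxA

/-- The ← direction, abstractly. -/
lemma dir_mpr (P R : Set ℕ)
    (H : ∀ A B : Set ℕ, REset A → REset B → A ∩ B = ∅ → SemiRed A B P R) :
    EIpair P R := by
  obtain ⟨g, hg, hg0, hg1⟩ := H _ _ (Kset_re 0) (Kset_re 1) Kset_disj
  set fL : ℕ →. ℕ := fun u =>
    ((Denumerable.ofNat Code u.unpair.1.unpair.1).eval (g u.unpair.2)).map (fun _ => 1) with hfLdef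
  set fR : ℕ →. ℕ := fun u =>
    ((Denumerable.ofNat Code u.unpair.1.unpair.2).eval (g u.unpair.2)).map (fun _ => 0) with hfRdef
  have hu1 : Computable fun u : ℕ => u.unpair.1.unpair.1 :=
    (Primrec.fst.comp (Primrec.unpair.comp (Primrec.fst.comp Primrec.unpair))).to_comp
  have hu2 : Computable fun u : ℕ => u.unpair.1.unpair.2 :=
    (Primrec.snd.comp (Primrec.unpair.comp (Primrec.fst.comp Primrec.unpair))).to_comp
  have hux : Computable fun u : ℕ => u.unpair.2 :=
    (Primrec.snd.comp Primrec.unpair).to_comp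
  have hfL : Partrec fL :=
    (eval_part.comp ((Computable.ofNat Code).comp hu1) (hg.comp hux)).map
      ((Computable.const 1).comp Computable.fst).to₂
  have hfR : Partrec fR :=
    (eval_part.comp ((Computable.ofNat Code).comp hu2) (hg.comp hux)).map
      ((Computable.const 0).comp Computable.fst).to₂
  obtain ⟨k, hk, Hk⟩ := Partrec.merge' hfL hfR
  obtain ⟨ck, eck⟩ := exists_code.1 (Partrec.nat_iff.1 hk)
  refine ⟨fun i j => g (Encodable.encode (Code.curry ck (Nat.pair i j))), ?_, ?_⟩
  · exact hg.comp ((Primrec.encode.comp (primrec₂_curry.comp (Primrec.const ck)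
      (Primrec₂.natPair.comp Primrec.fst Primrec.snd))).to_comp)
  · intro i j hi hj hd
    set n := Encodable.encode (Code.curry ck (Nat.pair i j)) with hn
    set u := Nat.pair (Nat.pair i j) n with hu
    have heval : (Denumerable.ofNat Code n).eval n = k u := by
      rw [hn, Denumerable.ofNat_encode, eval_curry, eck]
    have hfLu : fL u = ((Denumerable.ofNat Code i).eval (g n)).map (fun _ => 1) := by
      simp [hfLdef, hu, Nat.unpair_pair]
    have hfRu : fR u = ((Denumerable.ofNat Code j).eval (g n)).map (fun _ => 0) := by
      simp [hfRdef, hu, Nat.unpair_pair]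
    intro hmem
    have hdisj : ∀ z, z ∈ W i → z ∈ W j → False := by
      intro z h1 h2
      have : z ∈ W i ∩ W j := ⟨h1, h2⟩
      rw [hd] at this
      exact this
    have key : (k u).Dom → False := by
      intro hdom
      obtain ⟨v, hv⟩ : ∃ v, v ∈ k u := ⟨(k u).get hdom, Part.get_mem hdom⟩
      rcases (Hk u).1 v hv with h | h
      · -- v ∈ fL u, so v = 1 and g n ∈ W i
        rw [hfLu, Part.mem_map_iff] at h
        obtain ⟨w, hw, rfl⟩ := h
        have h1 : (1 : ℕ) ∈ (Denumerable.ofNat Code n).eval n := by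
          rw [heval]; exact hv
        have : g n ∈ R := hg1 n h1
        exact hdisj (g n) (Part.dom_iff_mem.2 ⟨w, hw⟩) (hj this)
      · -- v ∈ fR u, so v = 0 and g n ∈ W j
        rw [hfRu, Part.mem_map_iff] at h
        obtain ⟨w, hw, rfl⟩ := h
        have h0 : (0 : ℕ) ∈ (Denumerable.ofNat Code n).eval n := by
          rw [heval]; exact hv
        have : g n ∈ P := hg0 n h0
        exact hdisj (g n) (hi this) (Part.dom_iff_mem.2 ⟨w, hw⟩)
    rcases hmem with h | h
    · exact key ((Hk u).2.2 (Or.inl (by rw [hfLu]; exact h)))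
    · exact key ((Hk u).2.2 (Or.inr (by rw [hfRu]; exact h)))

theorem smullyan_characterization {L : Language} [Encodable L.Sentence]
    (T : L.Theory) (hTcons : T.IsSatisfiable)
    (hTP : REset (codes (thmSet T))) (hTR : REset (codes (refSet T))) :
    EIpair (codes (thmSet T)) (codes (refSet T)) ↔
      ∀ A B : Set ℕ, REset A → REset B → A ∩ B = ∅ →
        SemiRed A B (codes (thmSet T)) (codes (refSet T)) := by
  constructor
  · exact fun hEI => dir_mp _ _ (thm_ref_disj T hTcons) hTP hTR hEI
  · exact fun H => dir_mpr _ _ H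
end

section
/- Every effectively inseparable pair of disjoint r.e. sets consists of two creative sets; in particular, if (A, B) is effectively inseparable then A is not recursive and B is not recursive. -/
/-- A set is creative if it is r.e. and there is a recursive `h` such that
whenever `W e` is disjoint from `A`, `h e` lies outside `A ∪ W e`. -/
def Creative (A : Set ℕ) : Prop :=
  REset A ∧ ∃ h : ℕ → ℕ, Computable h ∧ ∀ e, W e ⊆ Aᶜ → h e ∉ A ∪ W e

open Nat.Partrec.Code in
/-- There is a computable function `g` with `W (g e) = W e ∪ W b`. -/
lemma union_index (b : ℕ) : ∃ g : ℕ → ℕ, Computable g ∧ ∀ e, W (g e) = W e ∪ W b := by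
  have hu : Computable (fun n : ℕ => n.unpair) := Primrec.unpair.to_comp
  have h1 : Partrec (fun n : ℕ =>
      (Denumerable.ofNat Nat.Partrec.Code n.unpair.1).eval n.unpair.2) :=
    eval_part.comp ((Computable.ofNat _).comp (Computable.fst.comp hu))
      (Computable.snd.comp hu)
  have h2 : Partrec (fun n : ℕ =>
      (Denumerable.ofNat Nat.Partrec.Code b).eval n.unpair.2) :=
    eval_part.comp (Computable.const _) (Computable.snd.comp hu)
  obtain ⟨k, pk, hk⟩ := Partrec.merge' h1 h2
  obtain ⟨c, hc⟩ := exists_code.1 (Partrec.nat_iff.1 pk)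
  refine ⟨fun e => Encodable.encode (c.curry e),
    Computable.encode.comp ((Primrec₂.to_comp primrec₂_curry).comp (Computable.const c)
      Computable.id), fun e => ?_⟩
  ext x
  have : (Denumerable.ofNat Nat.Partrec.Code (Encodable.encode (c.curry e))) = c.curry e :=
    Denumerable.ofNat_encode _
  simp only [W, Set.mem_setOf_eq, this, eval_curry, Set.mem_union]
  rw [hc]
  simpa using (hk (Nat.pair e x)).2

lemma creative_not_computable {A : Set ℕ} (hC : Creative A) :
    ¬ ComputablePred (· ∈ A) := by
  intro hComp
  obtain ⟨-, h, -, hP⟩ := hC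
  have hre : REPred (fun x : ℕ => x ∈ Aᶜ) := (ComputablePred.not hComp).to_re
  have pr : Partrec (fun x : ℕ =>
      (Part.assert (x ∈ Aᶜ) fun _ => Part.some ()).map fun _ => 0) :=
    Partrec.map hre (Computable.const 0).to₂
  obtain ⟨c, hc⟩ := Nat.Partrec.Code.exists_code.1 (Partrec.nat_iff.1 pr)
  have hW : W (Encodable.encode c) = Aᶜ := by
    ext x
    simp only [W, Set.mem_setOf_eq, Denumerable.ofNat_encode,
      show Nat.Partrec.Code.eval c x = _ from congrFun hc x]
    simp [Part.assert]
  have := hP (Encodable.encode c) (by rw [hW])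
  rw [hW] at this
  simp at this

theorem ei_pair_creative (A B : Set ℕ)
    (hA : REset A) (hB : REset B) (hAB : A ∩ B = ∅) (hEI : EIpair A B) :
    (Creative A ∧ Creative B) ∧
      ¬ ComputablePred (· ∈ A) ∧ ¬ ComputablePred (· ∈ B) := by
  obtain ⟨a, ha⟩ := hA
  obtain ⟨b, hb⟩ := hB
  obtain ⟨f, hf, hEI⟩ := hEI
  obtain ⟨gB, hgB, hWgB⟩ := union_index b
  obtain ⟨gA, hgA, hWgA⟩ := union_index a
  have hCA : Creative A := by
    refine ⟨⟨a, ha⟩, fun e => f a (gB e),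
      hf.comp (Computable.const a) hgB, fun e he => ?_⟩
    have hdisj : W a ∩ W (gB e) = ∅ := by
      rw [ha, hWgB, hb, Set.inter_union_distrib_left, hAB]
      simp only [Set.union_empty]
      ext x; simp only [Set.mem_inter_iff, Set.mem_empty_iff_false, iff_false, not_and]
      intro hx hx'; exact he hx' hx
    have := hEI a (gB e) (le_of_eq ha.symm)
      (by rw [hWgB, hb]; exact Set.subset_union_right) hdisj
    rw [ha, hWgB] at this
    intro hmem
    exact this (hmem.elim (fun h => Or.inl h) (fun h => Or.inr (Or.inl h)))
  have hCB : Creative B := by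
    refine ⟨⟨b, hb⟩, fun e => f (gA e) b,
      hf.comp hgA (Computable.const b), fun e he => ?_⟩
    have hdisj : W (gA e) ∩ W b = ∅ := by
      rw [hb, hWgA, ha, Set.union_inter_distrib_right, hAB]
      simp only [Set.union_empty]
      ext x; simp only [Set.mem_inter_iff, Set.mem_empty_iff_false, iff_false, not_and]
      intro hx hx'; exact he hx hx'
    have := hEI (gA e) b
      (by rw [hWgA, ha]; exact Set.subset_union_right) (le_of_eq hb.symm) hdisj
    rw [hb, hWgA] at this
    intro hmem
    exact this (hmem.elim (fun h => Or.inr h) (fun h => Or.inl (Or.inl h)))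
  exact ⟨⟨hCA, hCB⟩, creative_not_computable hCA, creative_not_computable hCB⟩
end
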